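/- Let A, A' be full-rank k'×n' matrices and B, B' full-rank (k-k')×(n-n') matrices over F_q, all in reduced row echelon form, and let F, F' be k'×(n-n'-k+k') matrices. Then the subspace distance between the row spaces of [[A, φ_B(F)],[0, B]] and [[A', φ_{B'}(F')],[0, B']] is at least d_S(rowspace(A), rowspace(A')) + d_S(rowspace(B), rowspace(B')). -/
import Mathlib


open Module

/-- A full-rank `k × n` matrix is in reduced row echelon form with pivot columns
given by the strictly increasing list `c` if the pivot columns form an identity
submatrix and all entries to the left of each pivot are zero. -/
def IsRRE {F : Type*} [Field F] {k n : ℕ} (A : Matrix (Fin k) (Fin n) F)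
    (c : Fin k → Fin n) : Prop :=
  StrictMono c ∧ (∀ i j, A i (c j) = if j = i then 1 else 0) ∧
    (∀ (i : Fin k) (j : Fin n), (j : ℕ) < (c i : ℕ) → A i j = 0)

/-- The row space of a matrix: the span of its rows. -/
def rowSpace {F : Type*} [Field F] {k n : ℕ} (A : Matrix (Fin k) (Fin n) F) :
    Submodule F (Fin n → F) :=
  Submodule.span F (Set.range fun i => A i)

open scoped Classical in
/-- `insertZeroCols c M` is `φ_B(M)`: the matrix obtained from `M` by inserting zero
columns at the pivot positions (given by `c`) of a full-rank RRE matrix `B` with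
`kb` rows and `nb` columns. -/
noncomputable def insertZeroCols {F : Type*} [Field F] {k' kb nb : ℕ}
    (c : Fin kb → Fin nb) (M : Matrix (Fin k') (Fin (nb - kb)) F) :
    Matrix (Fin k') (Fin nb) F :=
  Matrix.of fun i j =>
    if ∃ t, c t = j then 0
    else if h : (j : ℕ) - (Finset.univ.filter fun t : Fin kb => (c t : ℕ) ≤ (j : ℕ)).card
        < nb - kb then
      M i ⟨_, h⟩
    else 0

/-- The subspace distance `d_S(U,W) = dim U + dim W - 2 dim (U ⊓ W)`. -/
noncomputable def subspaceDist {F : Type*} [Field F] {V : Type*} [AddCommGroup V]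
    [Module F V] (U W : Submodule F V) : ℕ :=
  finrank F U + finrank F W - 2 * finrank F ↥(U ⊓ W)

/-- Row space of a matrix with arbitrary row and column index types. -/
def rowSpace' {F : Type*} [Field F] {ρ ι : Type*} (A : Matrix ρ ι F) :
    Submodule F (ι → F) :=
  Submodule.span F (Set.range fun i => A i)

-- auxiliary lemmas

lemma aux_single_li (F : Type*) [Field F] (ι : Type*) [Fintype ι] [DecidableEq ι] :
    LinearIndependent F (fun i : ι => Pi.single i (1 : F)) := by
  have h := (Pi.basisFun F ι).linearIndependent
  rwa [show ⇑(Pi.basisFun F ι) = fun i => Pi.single i (1:F) from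
    funext fun i => Pi.basisFun_apply F ι i] at h

lemma aux_rre_li {F : Type*} [Field F] {k n : ℕ} {A : Matrix (Fin k) (Fin n) F}
    {c : Fin k → Fin n} (hA : IsRRE A c) :
    LinearIndependent F (fun i => A i) := by
  apply LinearIndependent.of_comp (LinearMap.funLeft F F c)
  have h : (fun i => (LinearMap.funLeft F F c) (A i)) = fun i => Pi.single i (1:F) := by
    funext i j
    simp [LinearMap.funLeft_apply, hA.2.1 i j, Pi.single_apply]
  rw [Function.comp_def, h]
  exact aux_single_li F (Fin k)

lemma aux_insert_pivot_zero {F : Type*} [Field F] {k' kb nb : ℕ}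
    (c : Fin kb → Fin nb) (M : Matrix (Fin k') (Fin (nb - kb)) F) (i : Fin k') (t : Fin kb) :
    insertZeroCols c M i (c t) = 0 := by
  classical
  simp only [insertZeroCols, Matrix.of_apply]
  rw [if_pos ⟨t, rfl⟩]

lemma aux_big_li {F : Type*} [Field F] {ka kb na nb : ℕ}
    {A : Matrix (Fin ka) (Fin na) F} {ca : Fin ka → Fin na} (hA : IsRRE A ca)
    {B : Matrix (Fin kb) (Fin nb) F} {cb : Fin kb → Fin nb} (hB : IsRRE B cb)
    (M : Matrix (Fin ka) (Fin (nb - kb)) F) :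
    LinearIndependent F (fun i => Matrix.fromBlocks A (insertZeroCols cb M) 0 B i) := by
  classical
  apply LinearIndependent.of_comp (LinearMap.funLeft F F (Sum.map ca cb))
  have h : (fun i => (LinearMap.funLeft F F (Sum.map ca cb))
      (Matrix.fromBlocks A (insertZeroCols cb M) 0 B i))
      = fun i => Pi.single i (1:F) := by
    funext i j
    cases i with
    | inl a =>
      cases j with
      | inl j =>
        simp [LinearMap.funLeft_apply, Matrix.fromBlocks, hA.2.1 a j, Pi.single_apply]
      | inr j =>
        simp [LinearMap.funLeft_apply, Matrix.fromBlocks, aux_insert_pivot_zero,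
          Pi.single_apply]
    | inr b =>
      cases j with
      | inl j =>
        simp [LinearMap.funLeft_apply, Matrix.fromBlocks, Pi.single_apply]
      | inr j =>
        simp [LinearMap.funLeft_apply, Matrix.fromBlocks, hB.2.1 b j, Pi.single_apply]
  rw [Function.comp_def, h]
  exact aux_single_li F _

set_option maxHeartbeats 800000 in
lemma aux_rowspace_finrank {F : Type*} [Field F] {k n : ℕ}
    {A : Matrix (Fin k) (Fin n) F} {c : Fin k → Fin n} (hA : IsRRE A c) :
    finrank F (rowSpace A) = k := by
  have h := finrank_span_eq_card (R := F) (aux_rre_li hA)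
  rw [Fintype.card_fin] at h
  exact h

set_option synthInstance.maxHeartbeats 400000 in
set_option maxHeartbeats 1600000 in
lemma aux_inter_bound {F : Type*} [Field F] {n1 n2 : Type*} [Fintype n1] [Fintype n2]
    (U U' : Submodule F (n1 ⊕ n2 → F))
    (SA SA' : Submodule F (n1 → F)) (SB SB' : Submodule F (n2 → F))
    (h1 : U.map (LinearMap.funLeft F F Sum.inl) ≤ SA)
    (h1' : U'.map (LinearMap.funLeft F F Sum.inl) ≤ SA')
    (h2 : ∀ v ∈ U, (LinearMap.funLeft F F Sum.inl) v = 0 →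
      (LinearMap.funLeft F F Sum.inr) v ∈ SB)
    (h2' : ∀ v ∈ U', (LinearMap.funLeft F F Sum.inl) v = 0 →
      (LinearMap.funLeft F F Sum.inr) v ∈ SB') :
    finrank F ↥(U ⊓ U') ≤ finrank F ↥(SA ⊓ SA') + finrank F ↥(SB ⊓ SB') := by
  classical
  set π₁ := LinearMap.funLeft F F (Sum.inl : n1 → n1 ⊕ n2) with hπ₁
  set π₂ := LinearMap.funLeft F F (Sum.inr : n2 → n1 ⊕ n2) with hπ₂
  set K := U ⊓ U' with hK
  set φ : ↥K →ₗ[F] (n1 → F) := π₁.domRestrict K with hφ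
  have hrange : LinearMap.range φ ≤ SA ⊓ SA' := by
    rintro x hx
    obtain ⟨⟨v, hv⟩, rfl⟩ := hx
    exact ⟨h1 ⟨v, hv.1, rfl⟩, h1' ⟨v, hv.2, rfl⟩⟩
  have hkermem : ∀ x : ↥(LinearMap.ker φ),
      (π₂ ∘ₗ K.subtype ∘ₗ (LinearMap.ker φ).subtype) x ∈ SB ⊓ SB' := by
    rintro ⟨⟨v, hv⟩, hk⟩
    have hz : π₁ v = 0 := by
      simpa [hφ, LinearMap.mem_ker, LinearMap.domRestrict_apply] using hk
    exact ⟨h2 v hv.1 hz, h2' v hv.2 hz⟩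
  set ψ : ↥(LinearMap.ker φ) →ₗ[F] ↥(SB ⊓ SB') :=
    LinearMap.codRestrict _ (π₂ ∘ₗ K.subtype ∘ₗ (LinearMap.ker φ).subtype) hkermem with hψ
  have hinj : Function.Injective ψ := by
    rintro ⟨⟨v, hv⟩, hk⟩ ⟨⟨w, hw⟩, hk'⟩ hxy
    have hz1 : π₁ v = 0 := by
      simpa [hφ, LinearMap.mem_ker, LinearMap.domRestrict_apply] using hk
    have hz1' : π₁ w = 0 := by
      simpa [hφ, LinearMap.mem_ker, LinearMap.domRestrict_apply] using hk'
    have hz2 : π₂ v = π₂ w := by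
      have h' := congrArg Subtype.val hxy
      simpa [hψ, LinearMap.codRestrict_apply] using h'
    have hvw : v = w := by
      funext j
      cases j with
      | inl a => rw [show v (Sum.inl a) = π₁ v a from rfl,
          show w (Sum.inl a) = π₁ w a from rfl, hz1, hz1']
      | inr b => exact congrFun hz2 b
    apply Subtype.ext
    apply Subtype.ext
    exact hvw
  have e1 := LinearMap.finrank_range_add_finrank_ker φ
  have i1 : finrank F ↥(LinearMap.range φ) ≤ finrank F ↥(SA ⊓ SA') :=
    Submodule.finrank_mono hrange
  have i2 : finrank F ↥(LinearMap.ker φ) ≤ finrank F ↥(SB ⊓ SB') :=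
    LinearMap.finrank_le_finrank_of_injective hinj
  omega

lemma aux_pi1_row_inl {F : Type*} [Field F] {ka kb na nb : ℕ}
    (A : Matrix (Fin ka) (Fin na) F) (C : Matrix (Fin ka) (Fin nb) F)
    (B : Matrix (Fin kb) (Fin nb) F) (a : Fin ka) :
    (LinearMap.funLeft F F Sum.inl) (Matrix.fromBlocks A C 0 B (Sum.inl a)) = A a := by
  funext j; simp [LinearMap.funLeft_apply, Matrix.fromBlocks]

lemma aux_pi1_row_inr {F : Type*} [Field F] {ka kb na nb : ℕ}
    (A : Matrix (Fin ka) (Fin na) F) (C : Matrix (Fin ka) (Fin nb) F)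
    (B : Matrix (Fin kb) (Fin nb) F) (b : Fin kb) :
    (LinearMap.funLeft F F Sum.inl) (Matrix.fromBlocks A C 0 B (Sum.inr b)) = 0 := by
  funext j; simp [LinearMap.funLeft_apply, Matrix.fromBlocks]

lemma aux_pi2_row_inl {F : Type*} [Field F] {ka kb na nb : ℕ}
    (A : Matrix (Fin ka) (Fin na) F) (C : Matrix (Fin ka) (Fin nb) F)
    (B : Matrix (Fin kb) (Fin nb) F) (a : Fin ka) :
    (LinearMap.funLeft F F Sum.inr) (Matrix.fromBlocks A C 0 B (Sum.inl a)) = C a := by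
  funext j; simp [LinearMap.funLeft_apply, Matrix.fromBlocks]

lemma aux_pi2_row_inr {F : Type*} [Field F] {ka kb na nb : ℕ}
    (A : Matrix (Fin ka) (Fin na) F) (C : Matrix (Fin ka) (Fin nb) F)
    (B : Matrix (Fin kb) (Fin nb) F) (b : Fin kb) :
    (LinearMap.funLeft F F Sum.inr) (Matrix.fromBlocks A C 0 B (Sum.inr b)) = B b := by
  funext j; simp [LinearMap.funLeft_apply, Matrix.fromBlocks]

lemma aux_map_pi1 {F : Type*} [Field F] {ka kb na nb : ℕ}
    (A : Matrix (Fin ka) (Fin na) F) (C : Matrix (Fin ka) (Fin nb) F)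
    (B : Matrix (Fin kb) (Fin nb) F) :
    (rowSpace' (Matrix.fromBlocks A C 0 B)).map (LinearMap.funLeft F F Sum.inl)
      ≤ rowSpace A := by
  rw [rowSpace', Submodule.map_span]
  apply Submodule.span_le.2
  rintro x ⟨y, ⟨i, rfl⟩, rfl⟩
  cases i with
  | inl a =>
    rw [aux_pi1_row_inl]
    exact Submodule.subset_span ⟨a, rfl⟩
  | inr b =>
    rw [aux_pi1_row_inr]
    exact (rowSpace A).zero_mem

lemma aux_ker_pi2 {F : Type*} [Field F] {ka kb na nb : ℕ}
    {A : Matrix (Fin ka) (Fin na) F} (hAli : LinearIndependent F (fun i => A i))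
    (C : Matrix (Fin ka) (Fin nb) F) (B : Matrix (Fin kb) (Fin nb) F)
    (v : Fin na ⊕ Fin nb → F) (hv : v ∈ rowSpace' (Matrix.fromBlocks A C 0 B))
    (hz : LinearMap.funLeft F F Sum.inl v = 0) :
    LinearMap.funLeft F F Sum.inr v ∈ rowSpace B := by
  rw [rowSpace', Submodule.mem_span_range_iff_exists_fun] at hv
  obtain ⟨f, hf⟩ := hv
  have h0 : ∑ a, f (Sum.inl a) • A a = 0 := by
    have : (LinearMap.funLeft F F Sum.inl) v = ∑ a, f (Sum.inl a) • A a := by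
      rw [← hf, map_sum]
      simp only [map_smul]
      rw [Fintype.sum_sum_type]
      simp [aux_pi1_row_inl, aux_pi1_row_inr]
    rw [← this, hz]
  have hfa : ∀ a, f (Sum.inl a) = 0 :=
    Fintype.linearIndependent_iff.mp hAli (fun a => f (Sum.inl a)) h0
  have h2 : (LinearMap.funLeft F F Sum.inr) v = ∑ b, f (Sum.inr b) • B b := by
    rw [← hf, map_sum]
    simp only [map_smul]
    rw [Fintype.sum_sum_type]
    simp [aux_pi2_row_inl, aux_pi2_row_inr, hfa]
  rw [h2]
  exact Submodule.sum_mem _ fun b _ =>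
    Submodule.smul_mem _ _ (Submodule.subset_span ⟨b, rfl⟩)

/-- The subspace distance between the row spaces of `[[A, φ_B(F)],[0, B]]` and
`[[A', φ_{B'}(F')],[0, B']]` is at least
`d_S(rowspace A, rowspace A') + d_S(rowspace B, rowspace B')`. -/
theorem coset_dist_ge_sum {F : Type*} [Field F] [Fintype F] {n k n' k' : ℕ}
    (hk : 1 ≤ k) (hkn : 2 * k ≤ n) (hk' : 1 ≤ k') (hk'n' : k' ≤ n')
    (hkk' : 1 ≤ k - k') (hkn' : k - k' ≤ n - n')
    (A A' : Matrix (Fin k') (Fin n') F) (ca ca' : Fin k' → Fin n')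
    (hA : IsRRE A ca) (hA' : IsRRE A' ca')
    (B B' : Matrix (Fin (k - k')) (Fin (n - n')) F)
    (cb cb' : Fin (k - k') → Fin (n - n'))
    (hB : IsRRE B cb) (hB' : IsRRE B' cb')
    (M M' : Matrix (Fin k') (Fin ((n - n') - (k - k'))) F) :
    subspaceDist (rowSpace A) (rowSpace A') + subspaceDist (rowSpace B) (rowSpace B') ≤
      subspaceDist
        (rowSpace' (Matrix.fromBlocks A (insertZeroCols cb M) 0 B))
        (rowSpace' (Matrix.fromBlocks A' (insertZeroCols cb' M') 0 B')) := by
  classical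
  have hdA := aux_rowspace_finrank hA
  have hdA' := aux_rowspace_finrank hA'
  have hdB := aux_rowspace_finrank hB
  have hdB' := aux_rowspace_finrank hB'
  have hdG : finrank F
      ↥(rowSpace' (Matrix.fromBlocks A (insertZeroCols cb M) 0 B)) = k' + (k - k') := by
    have h := finrank_span_eq_card (R := F) (aux_big_li hA hB M)
    rw [rowSpace']
    simpa [Fintype.card_sum] using h
  have hdG' : finrank F
      ↥(rowSpace' (Matrix.fromBlocks A' (insertZeroCols cb' M') 0 B')) = k' + (k - k') := by
    have h := finrank_span_eq_card (R := F) (aux_big_li hA' hB' M')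
    rw [rowSpace']
    simpa [Fintype.card_sum] using h
  have hint := aux_inter_bound
    (rowSpace' (Matrix.fromBlocks A (insertZeroCols cb M) 0 B))
    (rowSpace' (Matrix.fromBlocks A' (insertZeroCols cb' M') 0 B'))
    (rowSpace A) (rowSpace A') (rowSpace B) (rowSpace B')
    (aux_map_pi1 _ _ _) (aux_map_pi1 _ _ _)
    (fun v hv hz => aux_ker_pi2 (aux_rre_li hA) _ _ v hv hz)
    (fun v hv hz => aux_ker_pi2 (aux_rre_li hA') _ _ v hv hz)
  have haA : finrank F ↥(rowSpace A ⊓ rowSpace A') ≤ k' := by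
    have h := Submodule.finrank_mono (inf_le_left : rowSpace A ⊓ rowSpace A' ≤ rowSpace A)
    omega
  have hbB : finrank F ↥(rowSpace B ⊓ rowSpace B') ≤ k - k' := by
    have h := Submodule.finrank_mono (inf_le_left : rowSpace B ⊓ rowSpace B' ≤ rowSpace B)
    omega
  simp only [subspaceDist]
  rw [hdA, hdA', hdB, hdB', hdG, hdG']
  omega
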